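/- Let G be a daisy cube of dimension n, i.e., the subgraph of the hypercube Q_n induced by a nonempty downward-closed vertex set V ⊆ {0,1}^n. Then W(G) − Mo(G) = Σ_{i=1}^n |W_{(i,1)}(G)|², where W(G) is the Wiener index, Mo(G) the Mostar index, and W_{(i,1)}(G) the set of vertices of G whose i-th coordinate equals 1. -/

import Mathlib

/-!
Downward closure makes a daisy cube an isometric subgraph of `Q_n`: two vertices are joined
by a walk of length their Hamming distance, obtained by repeatedly switching off a `1` in a
coordinate where they differ. Hence `W(G) = ∑ᵢ |W_{(i,1)}| |W_{(i,0)}|`, and for an edge in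
direction `i` the vertices closer to either end form the semicubes `W_{(i,0)}` and `W_{(i,1)}`.
There are `|W_{(i,1)}|` edges in direction `i`, and `|W_{(i,1)}| ≤ |W_{(i,0)}|` (switch
coordinate `i` off), so `Mo(G) = ∑ᵢ |W_{(i,1)}| (|W_{(i,0)}| - |W_{(i,1)}|)`.
-/

/-- Vertices of the hypercube `Q_n`: binary strings of length `n`. -/
abbrev Vtx (n : ℕ) := Fin n → Bool

/-- The subgraph of the hypercube `Q_n` induced by a set `V` of vertices:
two vertices are adjacent iff they differ in precisely one coordinate
(i.e. their Hamming distance is `1`). -/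
def cubeGraph {n : ℕ} (V : Finset (Vtx n)) : SimpleGraph {u : Vtx n // u ∈ V} where
  Adj u v := hammingDist u.1 v.1 = 1
  symm := ⟨fun u v h => (hammingDist_comm v.1 u.1).trans h⟩
  loopless := ⟨fun u h => by simp [hammingDist_self] at h⟩

instance {n : ℕ} {V : Finset (Vtx n)} : DecidableRel (cubeGraph V).Adj :=
  fun u v => inferInstanceAs (Decidable (hammingDist u.1 v.1 = 1))

/-- A set of vertices of `Q_n` is downward closed if `u ≤ v` componentwise
and `v ∈ V` imply `u ∈ V`. -/
def DownClosed {n : ℕ} (V : Finset (Vtx n)) : Prop :=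
  ∀ u v : Vtx n, (∀ i, u i ≤ v i) → v ∈ V → u ∈ V

/-- The Wiener index: the sum of graph distances over all unordered pairs of vertices. -/
noncomputable def wiener {α : Type*} [Fintype α] [DecidableEq α] (G : SimpleGraph α) : ℕ :=
  ∑ p : Sym2 α, Sym2.lift ⟨fun u v => G.dist u v, fun _ _ => SimpleGraph.dist_comm⟩ p

/-- `closerCount G u v` is the number of vertices of `G` strictly closer
(in graph distance) to `u` than to `v`. -/
noncomputable def closerCount {α : Type*} (G : SimpleGraph α) (u v : α) : ℕ :=
  Nat.card {w : α // G.dist w u < G.dist w v}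

/-- The Mostar index: `∑_{uv ∈ E(G)} |n_{u,v} - n_{v,u}|`. -/
noncomputable def mostar {α : Type*} [Fintype α] [DecidableEq α] (G : SimpleGraph α)
    [DecidableRel G.Adj] : ℕ :=
  ∑ e ∈ G.edgeFinset,
    Sym2.lift ⟨fun u v => ((closerCount G u v : ℤ) - (closerCount G v u : ℤ)).natAbs,
      fun a b => by
        show (_ - _ : ℤ).natAbs = (_ - _ : ℤ).natAbs
        rw [← Int.natAbs_neg, neg_sub]⟩ e

/-- The semicube `W_{(i,χ)}`: vertices of the induced subgraph on `V`
whose `i`-th coordinate equals `χ` (`false` codes `0`, `true` codes `1`). -/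
def semicube {n : ℕ} (V : Finset (Vtx n)) (i : Fin n) (χ : Bool) : Finset (Vtx n) :=
  V.filter (fun u => u i = χ)

open Finset

section DoubleCounting

variable {α M : Type*} [Fintype α] [DecidableEq α] [AddCommMonoid M]

theorem two_nsmul_sum_sym2_lift (f : α → α → M) (hf : ∀ a b, f a b = f b a)
    (hdiag : ∀ a, f a a = 0) :
    2 • ∑ p : Sym2 α, Sym2.lift ⟨f, hf⟩ p = ∑ a, ∑ b, f a b := by
  rw [← Fintype.sum_prod_type',
    ← Finset.sum_fiberwise univ (fun x : α × α => s(x.1, x.2)) (fun x => f x.1 x.2), smul_sum]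
  refine Finset.sum_congr rfl fun p _ => ?_
  induction p using Sym2.inductionOn with
  | hf a b =>
    have hfiber :
        ({x ∈ univ | s(x.1, x.2) = s(a, b)} : Finset (α × α)) = {(a, b), (b, a)} := by
      ext ⟨x, y⟩
      simp
    rw [hfiber, Sym2.lift_mk]
    rcases eq_or_ne a b with rfl | hab
    · simp [hdiag]
    · rw [sum_pair (by simp [hab]), hf b a, two_nsmul]

theorem SimpleGraph.two_nsmul_sum_edgeFinset_lift (G : SimpleGraph α) [DecidableRel G.Adj]
    (f : α → α → M) (hf : ∀ a b, f a b = f b a) :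
    2 • ∑ e ∈ G.edgeFinset, Sym2.lift ⟨f, hf⟩ e =
      ∑ a, ∑ b, if G.Adj a b then f a b else 0 := by
  have hg : ∀ a b, (if G.Adj a b then f a b else 0) = if G.Adj b a then f b a else 0 :=
    fun a b => by simp only [G.adj_comm b a, hf b a]
  rw [← two_nsmul_sum_sym2_lift _ hg fun a => if_neg (G.irrefl)]
  congr 1
  refine (Finset.sum_congr rfl fun e he => ?_).trans
    (Finset.sum_subset (subset_univ _) fun e _ he => ?_)
  · induction e using Sym2.inductionOn with
    | hf a b => simp_all
  · induction e using Sym2.inductionOn with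
    | hf a b => simp_all

end DoubleCounting

theorem two_mul_wiener {α : Type*} [Fintype α] [DecidableEq α] (G : SimpleGraph α) :
    2 * wiener G = ∑ a, ∑ b, G.dist a b := by
  rw [← smul_eq_mul, wiener, two_nsmul_sum_sym2_lift _ _ fun _ => SimpleGraph.dist_self]

theorem two_mul_mostar {α : Type*} [Fintype α] [DecidableEq α] (G : SimpleGraph α)
    [DecidableRel G.Adj] :
    2 * mostar G = ∑ a, ∑ b,
      if G.Adj a b then ((closerCount G a b : ℤ) - closerCount G b a).natAbs else 0 := by
  rw [← smul_eq_mul, mostar, G.two_nsmul_sum_edgeFinset_lift]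

section Hamming

variable {ι : Type*} [Fintype ι] [DecidableEq ι] {β : ι → Type*} [∀ i, DecidableEq (β i)]

theorem hammingDist_update_right_add (x y : ∀ i, β i) (i : ι) (b : β i) :
    hammingDist x (Function.update y i b) + (if x i = y i then 0 else 1) =
      hammingDist x y + (if x i = b then 0 else 1) := by
  have hsplit : ∀ z : ∀ i, β i, (∀ j ≠ i, z j = y j) →
      hammingDist x z = (if x i = z i then 0 else 1) + #{j ∈ univ.erase i | x j ≠ y j} := by
    intro z hz
    rw [hammingDist, card_filter, card_filter, ← add_sum_erase _ _ (mem_univ i)]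
    congr 1
    · simp only [ne_eq, ite_not]
    · exact sum_congr rfl fun j hj => by rw [hz j (ne_of_mem_erase hj)]
  rw [hsplit _ fun j hj => Function.update_of_ne hj _ _, hsplit y fun _ _ => rfl,
    Function.update_self]
  ring

theorem hammingDist_update_self_of_ne {x : ∀ i, β i} {i : ι} {b : β i} (h : x i ≠ b) :
    hammingDist x (Function.update x i b) = 1 := by
  simpa [h] using hammingDist_update_right_add x x i b

theorem hammingDist_update_add_one {x y : ∀ i, β i} {i : ι} (h : x i ≠ y i) :
    hammingDist (Function.update x i (y i)) y + 1 = hammingDist x y := by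
  simpa [hammingDist_comm y, Ne.symm h] using hammingDist_update_right_add y x i (y i)

theorem eq_update_of_hammingDist_eq_one {x y : ∀ i, β i} (h : hammingDist x y = 1) {i : ι}
    (hi : x i ≠ y i) : y = Function.update x i (y i) := by
  have := hammingDist_update_add_one hi
  exact (hammingDist_eq_zero.mp (by omega)).symm

theorem hammingDist_lt_hammingDist_update_iff {w x : ∀ i, β i} {i : ι} {b : β i}
    (hb : b ≠ x i) :
    hammingDist w x < hammingDist w (Function.update x i b) ↔ w i = x i := by
  have := hammingDist_update_right_add w x i b
  by_cases hw : w i = x i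
  · rw [if_pos hw, if_neg (hw ▸ hb.symm)] at this
    simp only [hw, iff_true]
    omega
  · rw [if_neg hw] at this
    simp only [hw, iff_false, not_lt]
    split_ifs at this <;> omega

end Hamming

def flipAt {n : ℕ} (i : Fin n) (x : Vtx n) : Vtx n :=
  Function.update x i (!x i)

section Cube

variable {n : ℕ} {V : Finset (Vtx n)}

@[simp]
theorem flipAt_apply_self (i : Fin n) (x : Vtx n) : flipAt i x i = !x i :=
  Function.update_self _ _ _

theorem flipAt_involutive (i : Fin n) : Function.Involutive (flipAt i) := fun x => by
  simp [flipAt]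

theorem eq_of_flipAt_eq_flipAt {i j : Fin n} {x : Vtx n} (h : flipAt i x = flipAt j x) :
    i = j := by
  by_contra hij
  have := congrFun h i
  simp [flipAt, Function.update_of_ne hij] at this

theorem cubeGraph_adj_iff {u v : V} :
    (cubeGraph V).Adj u v ↔ ∃ i, v.1 = flipAt i u.1 := by
  refine ⟨fun h => ?_, fun ⟨i, hi⟩ => ?_⟩
  · have h : hammingDist u.1 v.1 = 1 := h
    obtain ⟨i, hi⟩ :=
      Function.ne_iff.mp (hammingDist_pos.mp (by omega : 0 < hammingDist u.1 v.1))
    refine ⟨i, (eq_update_of_hammingDist_eq_one h hi).trans ?_⟩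
    rw [flipAt, Bool.eq_not.mpr hi.symm]
  · show hammingDist u.1 v.1 = 1
    rw [hi]
    exact hammingDist_update_self_of_ne (by simp)

theorem hammingDist_le_length {u v : V} (p : (cubeGraph V).Walk u v) :
    hammingDist u.1 v.1 ≤ p.length := by
  induction p with
  | nil => simp
  | @cons a b c hadj p ih =>
    have := hammingDist_triangle a.1 b.1 c.1
    have hab : hammingDist a.1 b.1 = 1 := hadj
    rw [SimpleGraph.Walk.length_cons]
    omega

theorem natCard_subtype_apply_eq (i : Fin n) (b : Bool) :
    Nat.card {u : V // u.1 i = b} = #(semicube V i b) := by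
  rw [Nat.card_congr (Equiv.subtypeSubtypeEquivSubtypeInter (· ∈ V) (· i = b))]
  exact Nat.subtype_card _ fun u => by simp [semicube]

theorem sum_comp_apply_eq (i : Fin n) {M : Type*} [AddCommMonoid M] (g : Bool → M) :
    ∑ u ∈ V, g (u i) = #(semicube V i true) • g true + #(semicube V i false) • g false := by
  rw [← sum_filter_add_sum_filter_not V (fun u => u i = true)]
  simp only [Bool.not_eq_true]
  exact congrArg₂ (· + ·) (sum_eq_card_nsmul fun u hu => congrArg g (mem_filter.mp hu).2)
    (sum_eq_card_nsmul fun u hu => congrArg g (mem_filter.mp hu).2)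

theorem sum_sum_hammingDist (V : Finset (Vtx n)) :
    ∑ u ∈ V, ∑ v ∈ V, hammingDist u v =
      ∑ i, 2 * (#(semicube V i true) * #(semicube V i false)) := by
  have hcoord : ∀ i b, ∑ v ∈ V, (if b ≠ v i then 1 else 0) = #(semicube V i (!b)) := by
    intro i b
    rw [← card_filter, semicube]
    congr 1
    exact filter_congr fun v _ => by rw [Bool.eq_not, ne_comm]
  calc ∑ u ∈ V, ∑ v ∈ V, hammingDist u v
      = ∑ u ∈ V, ∑ i, ∑ v ∈ V, (if u i ≠ v i then 1 else 0) :=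
        sum_congr rfl fun u _ => by simp only [hammingDist, card_filter]; exact sum_comm
    _ = ∑ i, ∑ u ∈ V, #(semicube V i (!u i)) := by
        rw [sum_comm]; simp only [hcoord]
    _ = _ := sum_congr rfl fun i _ => by
        rw [sum_comp_apply_eq i fun b => #(semicube V i (!b))]
        simp only [Bool.not_true, Bool.not_false, smul_eq_mul]
        ring

end Cube

namespace DownClosed

variable {n : ℕ} {V : Finset (Vtx n)}

theorem update_false_mem (hdc : DownClosed V) {u : Vtx n} (hu : u ∈ V) (i : Fin n) :
    Function.update u i false ∈ V := by
  refine hdc _ u (fun j => ?_) hu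
  rcases eq_or_ne j i with rfl | hj
  · simp
  · simp [Function.update_of_ne hj]

theorem exists_walk_length_eq (hdc : DownClosed V) :
    ∀ (d : ℕ) (u v : V), hammingDist u.1 v.1 = d →
      ∃ p : (cubeGraph V).Walk u v, p.length = d
  | 0, u, v, h => by
    obtain rfl : u = v := Subtype.ext (hammingDist_eq_zero.mp h)
    exact ⟨.nil, rfl⟩
  | d + 1, u, v, h => by
    have step : ∀ u v : V, hammingDist u.1 v.1 = d + 1 → ∀ i, u.1 i = true →
        v.1 i = false → ∃ p : (cubeGraph V).Walk u v, p.length = d + 1 := by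
      intro u v h i hu hv
      let u' : V := ⟨Function.update u.1 i false, hdc.update_false_mem u.2 i⟩
      have hadj : (cubeGraph V).Adj u u' := hammingDist_update_self_of_ne (by simp [hu])
      have hdist := hammingDist_update_add_one (x := u.1) (y := v.1) (i := i) (by simp [hu, hv])
      rw [hv] at hdist
      obtain ⟨p, hp⟩ := exists_walk_length_eq hdc d u' v
        (show hammingDist (Function.update u.1 i false) v.1 = d by omega)
      exact ⟨.cons hadj p, by rw [SimpleGraph.Walk.length_cons, hp]⟩
    obtain ⟨i, hi⟩ :=
      Function.ne_iff.mp (hammingDist_pos.mp (by omega : 0 < hammingDist u.1 v.1))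
    cases hu : u.1 i
    · obtain ⟨p, hp⟩ :=
        step v u (by rwa [hammingDist_comm]) i (by simpa [hu] using hi.symm) hu
      exact ⟨p.reverse, by rw [SimpleGraph.Walk.length_reverse, hp]⟩
    · exact step u v h i hu (by simpa [hu] using hi.symm)

theorem dist_eq_hammingDist (hdc : DownClosed V) (u v : V) :
    (cubeGraph V).dist u v = hammingDist u.1 v.1 := by
  obtain ⟨p, hp⟩ := hdc.exists_walk_length_eq _ u v rfl
  refine le_antisymm (hp ▸ SimpleGraph.dist_le p) ?_
  obtain ⟨q, hq⟩ := p.reachable.exists_walk_length_eq_dist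
  exact hq ▸ hammingDist_le_length q

theorem closerCount_eq (hdc : DownClosed V) {u v : V} {i : Fin n} (hv : v.1 = flipAt i u.1) :
    closerCount (cubeGraph V) u v = #(semicube V i (u.1 i)) := by
  have hcloser : ∀ w : V, (cubeGraph V).dist w u < (cubeGraph V).dist w v ↔ w.1 i = u.1 i :=
    fun w => by
      rw [hdc.dist_eq_hammingDist, hdc.dist_eq_hammingDist, hv]
      exact hammingDist_lt_hammingDist_update_iff (by simp)
  rw [closerCount, Nat.card_congr (Equiv.subtypeEquivRight hcloser)]
  exact natCard_subtype_apply_eq i _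

theorem card_semicube_true_le_false (hdc : DownClosed V) (i : Fin n) :
    #(semicube V i true) ≤ #(semicube V i false) := by
  refine card_le_card_of_injOn (flipAt i) (fun u hu => ?_) (flipAt_involutive i).injective.injOn
  simp only [semicube, coe_filter, Set.mem_ofPred_eq] at hu ⊢
  refine ⟨?_, by simp [hu.2]⟩
  simpa [flipAt, hu.2] using hdc.update_false_mem hu.1 i

theorem card_filter_flipAt_mem (hdc : DownClosed V) (i : Fin n) :
    #{u ∈ V | flipAt i u ∈ V} = 2 * #(semicube V i true) := by
  set E := {u ∈ V | flipAt i u ∈ V}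
  have hdown : #{u ∈ E | ¬u i = true} = #{u ∈ E | u i = true} := by
    refine card_nbij' (flipAt i) (flipAt i) (fun u hu => ?_) (fun u hu => ?_)
      (fun u _ => flipAt_involutive i u) (fun u _ => flipAt_involutive i u) <;>
    simp_all [E, flipAt_involutive i _]
  have hup : {u ∈ E | u i = true} = semicube V i true := by
    ext u
    simp only [E, semicube, mem_filter, and_congr_left_iff, and_iff_left_iff_imp]
    intro hu huV
    simpa [flipAt, hu] using hdc.update_false_mem huV i
  rw [← card_filter_add_card_filter_not (fun u => u i = true), hdown, hup, two_mul]

theorem wiener_cubeGraph (hdc : DownClosed V) :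
    wiener (cubeGraph V) = ∑ i, #(semicube V i true) * #(semicube V i false) := by
  have h := two_mul_wiener (cubeGraph V)
  have hsum :
      ∑ u : V, ∑ v : V, hammingDist u.1 v.1 = ∑ u ∈ V, ∑ v ∈ V, hammingDist u v := by
    rw [← sum_coe_sort V]
    exact sum_congr rfl fun u _ => sum_coe_sort V (hammingDist u.1)
  simp only [hdc.dist_eq_hammingDist, hsum, sum_sum_hammingDist, ← mul_sum] at h
  exact Nat.eq_of_mul_eq_mul_left two_pos h

theorem ite_adj_natAbs_closerCount_eq (hdc : DownClosed V) (u v : V) :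
    (if (cubeGraph V).Adj u v then
        ((closerCount (cubeGraph V) u v : ℤ) - closerCount (cubeGraph V) v u).natAbs else 0) =
      ∑ i, if v.1 = flipAt i u.1 then
        ((#(semicube V i false) : ℤ) - #(semicube V i true)).natAbs else 0 := by
  by_cases h : ∃ i, v.1 = flipAt i u.1
  · obtain ⟨i, hi⟩ := h
    have hu : u.1 = flipAt i v.1 := by rw [hi, flipAt_involutive]
    rw [if_pos (cubeGraph_adj_iff.mpr ⟨i, hi⟩), hdc.closerCount_eq hi, hdc.closerCount_eq hu,
      hi, flipAt_apply_self, sum_eq_single i (fun j _ hji => if_neg fun hj => hji ?_) (by simp),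
      if_pos rfl]
    · cases u.1 i
      · rfl
      · rw [← Int.natAbs_neg, neg_sub]; rfl
    · exact (eq_of_flipAt_eq_flipAt hj).symm
  · rw [if_neg (mt cubeGraph_adj_iff.mp h), sum_eq_zero fun i _ => if_neg fun hi => h ⟨i, hi⟩]

theorem sum_sum_ite_eq_flipAt (hdc : DownClosed V) (i : Fin n) (c : ℕ) :
    ∑ u : V, ∑ v : V, (if v.1 = flipAt i u.1 then c else 0) = 2 * #(semicube V i true) * c :=
  calc ∑ u : V, ∑ v : V, (if v.1 = flipAt i u.1 then c else 0)
      = ∑ u ∈ V, if flipAt i u ∈ V then c else 0 := by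
        rw [← sum_coe_sort V]
        exact sum_congr rfl fun u _ =>
          (sum_coe_sort V fun v => if v = flipAt i u.1 then c else 0).trans (sum_ite_eq' _ _ _)
    _ = 2 * #(semicube V i true) * c := by
        rw [← sum_filter, sum_const, smul_eq_mul, hdc.card_filter_flipAt_mem]

theorem mostar_cubeGraph (hdc : DownClosed V) :
    mostar (cubeGraph V) =
      ∑ i, #(semicube V i true) *
        ((#(semicube V i false) : ℤ) - #(semicube V i true)).natAbs := by
  refine Nat.eq_of_mul_eq_mul_left two_pos ?_
  calc 2 * mostar (cubeGraph V)
      = ∑ u : V, ∑ v : V, ∑ i, if v.1 = flipAt i u.1 then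
          ((#(semicube V i false) : ℤ) - #(semicube V i true)).natAbs else 0 := by
        simp only [two_mul_mostar, hdc.ite_adj_natAbs_closerCount_eq]
    _ = ∑ i, ∑ u : V, ∑ v : V, if v.1 = flipAt i u.1 then
          ((#(semicube V i false) : ℤ) - #(semicube V i true)).natAbs else 0 :=
        (sum_congr rfl fun u _ => sum_comm).trans sum_comm
    _ = _ := by simp only [hdc.sum_sum_ite_eq_flipAt, mul_sum, mul_assoc]

end DownClosed

theorem daisy_wiener_sub_mostar_general {n : ℕ} (V : Finset (Vtx n))
    (hdc : DownClosed V) :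
    (wiener (cubeGraph V) : ℤ) - (mostar (cubeGraph V) : ℤ) =
      ∑ i : Fin n, ((semicube V i true).card : ℤ) ^ 2 := by
  rw [hdc.wiener_cubeGraph, hdc.mostar_cubeGraph]
  push_cast
  rw [← sum_sub_distrib]
  refine sum_congr rfl fun i _ => ?_
  have hle : (#(semicube V i true) : ℤ) ≤ #(semicube V i false) := by
    exact_mod_cast hdc.card_semicube_true_le_false i
  rw [abs_of_nonneg (sub_nonneg.mpr hle)]
  ring

/-- For a daisy cube `G`,
`W(G) - Mo(G) = ∑_{i=1}^n |W_{(i,1)}(G)|²`. -/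
theorem daisy_wiener_sub_mostar {n : ℕ} (V : Finset (Vtx n))
    (hne : V.Nonempty) (hdc : DownClosed V) :
    (wiener (cubeGraph V) : ℤ) - (mostar (cubeGraph V) : ℤ) =
      ∑ i : Fin n, ((semicube V i true).card : ℤ) ^ 2 :=
  daisy_wiener_sub_mostar_general V hdc
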